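/- The polynomial P₄(T) = T²⁰ − 5T¹⁸ + 12T¹⁶ − 18T¹⁴ + 20T¹² − (219/11)·T¹⁰ + 20T⁸ − 18T⁶ + 12T⁴ − 5T² + 1 ∈ ℚ[T] is irreducible over ℚ, and no complex root of unity is a root of P₄ (i.e. if z ∈ ℂ satisfies zⁿ = 1 for some n ≥ 1, then P₄(z) ≠ 0). -/

import Mathlib

/-!
`P₄` is palindromic and even, so `11 P₄(z) = z¹⁰ T₄((z + z⁻¹)²)` for a real quintic `T₄` which
changes sign five times on `(0, 4)`. Hence every root `z` of `P₄` has `(z + z⁻¹)² ∈ (0, 4)`, which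
puts `z` on the unit circle. A factor of `Q₄ = 11 P₄ ∈ ℤ[X]` with leading coefficient `±1` then
has constant coefficient `±1`, while `Q₄ ≡ X¹⁰ mod 11` makes the constant coefficient of any
nonconstant such factor divisible by `11`. So `Q₄` is irreducible over `ℤ`, hence `P₄` over `ℚ`
by Gauss's lemma. Finally an algebraic integer has a minimal polynomial over `ℚ` with integer
coefficients, which the monic irreducible `P₄` is not, because of its coefficient `-219/11`.
-/

open Polynomial

/-- The normalized characteristic polynomial of Frobenius for `X_γ`, `γ` a non-square
mod 11. -/
noncomputable def P₄ : ℚ[X] :=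
  X ^ 20 - 5 * X ^ 18 + 12 * X ^ 16 - 18 * X ^ 14 + 20 * X ^ 12 - C (219 / 11 : ℚ) * X ^ 10 +
    20 * X ^ 8 - 18 * X ^ 6 + 12 * X ^ 4 - 5 * X ^ 2 + 1

theorem Complex.norm_eq_one_of_sq_add_one_eq_mul {z : ℂ} {a : ℝ} (h : z ^ 2 + 1 = a * z)
    (ha : a ^ 2 < 4) : ‖z‖ = 1 := by
  have hre := congrArg Complex.re h
  have him := congrArg Complex.im h
  simp only [pow_two, Complex.add_re, Complex.mul_re, Complex.one_re, Complex.ofReal_re,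
    Complex.ofReal_im, Complex.add_im, Complex.mul_im, Complex.one_im] at hre him
  have hx : 2 * z.re = a := by
    have : z.im * (2 * z.re - a) = 0 := by linarith
    rcases mul_eq_zero.mp this with hy | hx
    · rw [hy] at hre
      nlinarith [sq_nonneg (2 * z.re - a)]
    · linarith
  rw [← hx] at hre
  rw [Complex.norm_def, Complex.normSq_apply, Real.sqrt_eq_one]
  linarith

theorem Complex.norm_eq_one_of_add_inv_sq_eq {z : ℂ} {r : ℝ} (hz : z ≠ 0)
    (h : (z + z⁻¹) ^ 2 = r) (hr₀ : 0 ≤ r) (hr₄ : r < 4) : ‖z‖ = 1 := by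
  have hsq : (z + z⁻¹) ^ 2 = (√r : ℂ) ^ 2 := by
    rw [h, ← Complex.ofReal_pow, Real.sq_sqrt hr₀]
  have hquad (a : ℝ) (ha : z + z⁻¹ = a) (ha2 : a ^ 2 = r) : ‖z‖ = 1 := by
    refine Complex.norm_eq_one_of_sq_add_one_eq_mul ?_ (ha2 ▸ hr₄)
    rw [← ha]; field_simp
  rcases sq_eq_sq_iff_eq_or_eq_neg.mp hsq with ha | ha
  · exact hquad √r ha (Real.sq_sqrt hr₀)
  · exact hquad (-√r) (by simpa using ha) (by simpa using Real.sq_sqrt hr₀)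

theorem Polynomial.mem_of_isRoot_of_natDegree_le_card {K : Type*} [CommRing K] [IsDomain K]
    [DecidableEq K] {p : K[X]} (hp : p ≠ 0) {s : Finset K} (hs : p.natDegree ≤ s.card)
    (hroots : ∀ x ∈ s, p.IsRoot x) {x : K} (hx : p.IsRoot x) : x ∈ s := by
  by_contra hxs
  have hsub : insert x s ⊆ p.roots.toFinset := by
    intro y hy
    rw [Multiset.mem_toFinset, mem_roots hp]
    rcases Finset.mem_insert.mp hy with rfl | hy
    exacts [hx, hroots y hy]
  have := (Finset.card_le_card hsub).trans ((Multiset.toFinset_card_le _).trans (card_roots' p))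
  rw [Finset.card_insert_of_notMem hxs] at this
  omega

theorem Polynomial.exists_isRoot_mem_Ioo_of_eval_mul_neg {p : ℝ[X]} {a b : ℝ} (hab : a ≤ b)
    (h : p.eval a * p.eval b < 0) : ∃ r ∈ Set.Ioo a b, p.IsRoot r := by
  have hcont := p.continuous.continuousOn (s := Set.Icc a b)
  rcases mul_neg_iff.mp h with ⟨ha, hb⟩ | ⟨ha, hb⟩
  · exact intermediate_value_Ioo' hab hcont ⟨hb, ha⟩
  · exact intermediate_value_Ioo hab hcont ⟨ha, hb⟩

theorem Polynomial.exists_eq_ofReal_mem_Ioo_of_sign_changes {p : ℝ[X]} (hp : p ≠ 0) {n : ℕ}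
    (hdeg : p.natDegree ≤ n) (x : Fin (n + 1) → ℝ) (hx : StrictMono x)
    (hsign : ∀ i : Fin n, p.eval (x i.castSucc) * p.eval (x i.succ) < 0) {z : ℂ}
    (hz : aeval z p = 0) : ∃ r ∈ Set.Ioo (x 0) (x (Fin.last n)), z = r := by
  choose r hr hroot using fun i ↦
    exists_isRoot_mem_Ioo_of_eval_mul_neg (hx.monotone (Fin.castSucc_le_succ i)) (hsign i)
  have hr_mono : StrictMono r := fun i j hij ↦
    ((hr i).2.trans_le (hx.monotone (Fin.succ_le_castSucc_iff.mpr hij))).trans (hr j).1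
  classical
  have hz_mem : z ∈ Finset.univ.image fun i ↦ (r i : ℂ) := by
    refine mem_of_isRoot_of_natDegree_le_card (p := p.map (algebraMap ℝ ℂ))
      (map_ne_zero hp) ?_ ?_ (by rwa [IsRoot, eval_map_algebraMap])
    · rw [Finset.card_image_of_injective (f := fun i ↦ (r i : ℂ)) _
          (Complex.ofReal_injective.comp hr_mono.injective),
        Finset.card_univ, Fintype.card_fin, natDegree_map]
      exact hdeg
    · simp only [Finset.mem_image, Finset.mem_univ, true_and, forall_exists_index]
      rintro _ i rfl
      exact (hroot i).map
  obtain ⟨i, -, rfl⟩ := Finset.mem_image.mp hz_mem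
  exact ⟨r i, ⟨(hx.monotone (Fin.zero_le _)).trans_lt (hr i).1,
    (hr i).2.trans_le (hx.monotone (Fin.le_last _))⟩, rfl⟩

theorem Polynomial.coeff_zero_eq_zero_of_dvd_X_pow {R : Type*} [CommRing R] [IsDomain R]
    {f : R[X]} {k : ℕ} (hf : f ∣ X ^ k) (hdeg : f.natDegree ≠ 0) : f.coeff 0 = 0 := by
  obtain ⟨g, hg⟩ := hf
  have hfg : f * g ≠ 0 := hg ▸ pow_ne_zero k X_ne_zero
  have htrail := congrArg natTrailingDegree hg
  have hdegs := congrArg natDegree hg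
  rw [natTrailingDegree_mul (left_ne_zero_of_mul hfg) (right_ne_zero_of_mul hfg),
    natTrailingDegree_X_pow] at htrail
  rw [natDegree_mul (left_ne_zero_of_mul hfg) (right_ne_zero_of_mul hfg), natDegree_X_pow] at hdegs
  have := natTrailingDegree_le_natDegree f
  have := natTrailingDegree_le_natDegree g
  exact coeff_eq_zero_of_lt_natTrailingDegree (by omega)

theorem Polynomial.isUnit_coeff_zero_of_norm_roots_eq_one {F : ℤ[X]} (hlc : IsUnit F.leadingCoeff)
    (hroots : ∀ z : ℂ, aeval z F = 0 → ‖z‖ = 1) : IsUnit (F.coeff 0) := by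
  set Fc := F.map (algebraMap ℤ ℂ)
  have hnorm_lc : ‖Fc.leadingCoeff‖ = 1 := by
    rw [leadingCoeff_map_of_injective (RingHom.injective_int _), eq_intCast, Complex.norm_intCast,
      ← Int.cast_abs, Int.isUnit_iff_abs_eq.mp hlc, Int.cast_one]
  have hnorm_prod : ‖Fc.roots.prod‖ = 1 := by
    rw [show ‖Fc.roots.prod‖ = normHom Fc.roots.prod from rfl, map_multiset_prod]
    refine Multiset.prod_eq_one fun r hr ↦ ?_
    obtain ⟨z, hz, rfl⟩ := Multiset.mem_map.mp hr
    rw [mem_roots', IsRoot, eval_map_algebraMap] at hz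
    exact hroots z hz.2
  have hcoeff := (IsAlgClosed.splits Fc).coeff_zero_eq_leadingCoeff_mul_prod_roots
  rw [coeff_map, eq_intCast] at hcoeff
  have := congrArg norm hcoeff
  rw [norm_mul, norm_mul, norm_pow, norm_neg, norm_one, one_pow, one_mul, hnorm_lc, hnorm_prod,
    mul_one, Complex.norm_intCast, ← Int.cast_abs, Int.cast_eq_one] at this
  exact Int.isUnit_iff_abs_eq.mpr this

section IrreducibilityCriterion

variable {Q : ℤ[X]} {p k : ℕ} [Fact p.Prime]

theorem Polynomial.isUnit_of_dvd_of_isUnit_leadingCoeff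
    (hmod : Q.map (Int.castRingHom (ZMod p)) ∣ X ^ k)
    (hroots : ∀ z : ℂ, aeval z Q = 0 → ‖z‖ = 1) {F : ℤ[X]} (hF : F ∣ Q)
    (hlc : IsUnit F.leadingCoeff) : IsUnit F := by
  by_cases hdeg : F.natDegree = 0
  · obtain ⟨c, rfl⟩ := natDegree_eq_zero.mp hdeg
    exact isUnit_C.mpr (by rwa [leadingCoeff_C] at hlc)
  exfalso
  have hdeg_mod : (F.map (Int.castRingHom (ZMod p))).natDegree ≠ 0 := by
    rwa [natDegree_map_of_leadingCoeff_ne_zero _ (hlc.map _).ne_zero]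
  have hp_dvd : (p : ℤ) ∣ F.coeff 0 := by
    rw [← ZMod.intCast_zmod_eq_zero_iff_dvd, ← eq_intCast (Int.castRingHom (ZMod p)), ← coeff_map]
    exact coeff_zero_eq_zero_of_dvd_X_pow ((Polynomial.map_dvd _ hF).trans hmod) hdeg_mod
  have hunit := isUnit_coeff_zero_of_norm_roots_eq_one hlc
    fun z hz ↦ hroots z (aeval_eq_zero_of_dvd_aeval_eq_zero hF hz)
  exact (Nat.prime_iff_prime_int.mp Fact.out).not_isUnit (isUnit_of_dvd_unit hp_dvd hunit)

theorem Polynomial.irreducible_of_dvd_X_pow_of_norm_roots_eq_one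
    (hlc : Q.leadingCoeff = p) (hdeg : Q.natDegree ≠ 0)
    (hmod : Q.map (Int.castRingHom (ZMod p)) ∣ X ^ k)
    (hroots : ∀ z : ℂ, aeval z Q = 0 → ‖z‖ = 1) : Irreducible Q := by
  refine ⟨fun h ↦ hdeg (natDegree_eq_zero_of_isUnit h), fun F G hFG ↦ ?_⟩
  have hlcFG : F.leadingCoeff * G.leadingCoeff = p := by rw [← leadingCoeff_mul, ← hFG, hlc]
  refine ((Nat.prime_iff_prime_int.mp Fact.out).irreducible.isUnit_or_isUnit hlcFG.symm).imp
    (isUnit_of_dvd_of_isUnit_leadingCoeff hmod hroots ⟨G, hFG⟩)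
    (isUnit_of_dvd_of_isUnit_leadingCoeff hmod hroots ⟨F, by rw [hFG, mul_comm]⟩)

end IrreducibilityCriterion

theorem not_isIntegral_int_of_coeff_ne_intCast {L : Type*} [Field L] [CharZero L] {P : ℚ[X]}
    (hirr : Irreducible P) (hmonic : P.Monic) {n : ℕ} (hcoeff : ∀ c : ℤ, P.coeff n ≠ c) {z : L}
    (hz : aeval z P = 0) : ¬IsIntegral ℤ z := fun hint ↦ by
  rw [minpoly.eq_of_irreducible_of_monic hirr hz hmonic,
    minpoly.isIntegrallyClosed_eq_field_fractions' ℚ hint, coeff_map] at hcoeff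
  exact hcoeff _ rfl

noncomputable def T₄ : ℝ[X] :=
  11 * X ^ 5 - 165 * X ^ 4 + 957 * X ^ 3 - 2640 * X ^ 2 + 3355 * X - 1451

theorem eval_T₄ (x : ℝ) :
    T₄.eval x = 11 * x ^ 5 - 165 * x ^ 4 + 957 * x ^ 3 - 2640 * x ^ 2 + 3355 * x - 1451 := by
  simp [T₄]

theorem natDegree_T₄ : T₄.natDegree = 5 := by unfold T₄; compute_degree!

theorem exists_eq_ofReal_of_aeval_T₄_eq_zero {v : ℂ} (hv : aeval v T₄ = 0) :
    ∃ r ∈ Set.Ioo (0 : ℝ) 4, v = r := by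
  have hT₄ : T₄ ≠ 0 := fun h ↦ by simpa [h] using natDegree_T₄
  obtain ⟨r, hr, rfl⟩ := exists_eq_ofReal_mem_Ioo_of_sign_changes hT₄ natDegree_T₄.le
    ![0, 1, 7 / 2, 29 / 8, 37 / 10, 15 / 4]
    (Fin.strictMono_iff_lt_succ.mpr fun i ↦ by fin_cases i <;> simp <;> norm_num)
    (fun i ↦ by fin_cases i <;> simp [eval_T₄] <;> norm_num) hv
  exact ⟨r, ⟨by simpa using hr.1, hr.2.trans (by simp [Fin.last]; norm_num)⟩, rfl⟩

theorem aeval_T₄ (v : ℂ) :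
    aeval v T₄ = 11 * v ^ 5 - 165 * v ^ 4 + 957 * v ^ 3 - 2640 * v ^ 2 + 3355 * v - 1451 := by
  simp [T₄, map_ofNat]

theorem aeval_P₄ (z : ℂ) :
    aeval z P₄ = z ^ 20 - 5 * z ^ 18 + 12 * z ^ 16 - 18 * z ^ 14 + 20 * z ^ 12
      - 219 / 11 * z ^ 10 + 20 * z ^ 8 - 18 * z ^ 6 + 12 * z ^ 4 - 5 * z ^ 2 + 1 := by
  simp [P₄, map_ofNat]

theorem pow_ten_mul_aeval_T₄ {z : ℂ} (hz : z ≠ 0) :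
    z ^ 10 * aeval ((z + z⁻¹) ^ 2) T₄ = 11 * aeval z P₄ := by
  rw [aeval_T₄, aeval_P₄]
  field_simp
  ring

theorem norm_eq_one_of_aeval_P₄_eq_zero {z : ℂ} (hz : aeval z P₄ = 0) : ‖z‖ = 1 := by
  have hz₀ : z ≠ 0 := by
    rintro rfl
    norm_num [aeval_P₄] at hz
  have hT₄ : aeval ((z + z⁻¹) ^ 2) T₄ = 0 := by
    simpa [hz, hz₀] using pow_ten_mul_aeval_T₄ hz₀
  obtain ⟨r, hr, hzr⟩ := exists_eq_ofReal_of_aeval_T₄_eq_zero hT₄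
  exact Complex.norm_eq_one_of_add_inv_sq_eq hz₀ hzr hr.1.le hr.2

noncomputable def Q₄ : ℤ[X] :=
  11 * X ^ 20 - 55 * X ^ 18 + 132 * X ^ 16 - 198 * X ^ 14 + 220 * X ^ 12 - 219 * X ^ 10 +
    220 * X ^ 8 - 198 * X ^ 6 + 132 * X ^ 4 - 55 * X ^ 2 + 11

theorem natDegree_Q₄ : Q₄.natDegree = 20 := by unfold Q₄; compute_degree!

theorem leadingCoeff_Q₄ : Q₄.leadingCoeff = 11 := by
  rw [leadingCoeff, natDegree_Q₄]; simp [Q₄, coeff_X_pow]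

theorem map_Q₄ : Q₄.map (algebraMap ℤ ℚ) = C 11 * P₄ := by
  simp only [Q₄, P₄, Polynomial.map_add, Polynomial.map_sub, Polynomial.map_mul,
    Polynomial.map_pow, Polynomial.map_X, Polynomial.map_ofNat]
  have h : (11 : ℚ[X]) * C (219 / 11) = 219 := by
    rw [← map_ofNat C 11, ← C_mul, ← map_ofNat C 219]
    norm_num
  rw [map_ofNat C 11]
  linear_combination X ^ 10 * h

theorem map_Q₄_zmod : Q₄.map (Int.castRingHom (ZMod 11)) = X ^ 10 := by
  simp only [Q₄, Polynomial.map_add, Polynomial.map_sub, Polynomial.map_mul,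
    Polynomial.map_pow, Polynomial.map_X, Polynomial.map_ofNat]
  have h : (11 : (ZMod 11)[X]) = 0 := by
    rw [← map_ofNat C 11, show (11 : ZMod 11) = 0 by decide, C_0]
  linear_combination (X ^ 20 - 5 * X ^ 18 + 12 * X ^ 16 - 18 * X ^ 14 + 20 * X ^ 12 - 20 * X ^ 10 +
    20 * X ^ 8 - 18 * X ^ 6 + 12 * X ^ 4 - 5 * X ^ 2 + 1) * h

theorem aeval_Q₄ (z : ℂ) : aeval z Q₄ = 11 * aeval z P₄ := by
  rw [← aeval_map_algebraMap ℚ, map_Q₄, map_mul, aeval_C]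
  norm_num

theorem irreducible_Q₄ : Irreducible Q₄ :=
  haveI : Fact (Nat.Prime 11) := ⟨by norm_num⟩
  irreducible_of_dvd_X_pow_of_norm_roots_eq_one (p := 11) leadingCoeff_Q₄
    (by rw [natDegree_Q₄]; decide) (by rw [map_Q₄_zmod])
    fun z hz ↦ norm_eq_one_of_aeval_P₄_eq_zero (by simpa [aeval_Q₄] using hz)

theorem irreducible_P₄ : Irreducible P₄ := by
  have h := (irreducible_Q₄.isPrimitive (by rw [natDegree_Q₄]; decide)
    |>.irreducible_iff_irreducible_map_fraction_map (K := ℚ)).mp irreducible_Q₄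
  rwa [map_Q₄, irreducible_isUnit_mul (isUnit_C.mpr (by norm_num))] at h

theorem monic_P₄ : P₄.Monic := by unfold P₄; monicity!

theorem coeff_P₄_ten : P₄.coeff 10 = -219 / 11 := by
  simp [P₄, coeff_X_pow, coeff_C_mul, coeff_one, neg_div]

/-- `P₄` is irreducible over `ℚ`, and no complex root of unity is a root of `P₄`. -/
theorem stmt17 :
    Irreducible P₄ ∧ ∀ z : ℂ, (∃ n : ℕ, 1 ≤ n ∧ z ^ n = 1) → aeval z P₄ ≠ 0 := by
  refine ⟨irreducible_P₄, ?_⟩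
  rintro z ⟨n, hn, hzn⟩ hz
  have hcoeff : ∀ c : ℤ, P₄.coeff 10 ≠ c := by
    intro c hc
    rw [coeff_P₄_ten] at hc
    have : (-219 : ℚ) = 11 * c := by rw [← hc]; ring
    norm_cast at this
    omega
  exact not_isIntegral_int_of_coeff_ne_intCast irreducible_P₄ monic_P₄ hcoeff hz
    ⟨X ^ n - 1, monic_X_pow_sub_C 1 (by omega), by simp [hzn]⟩
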